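/- Let R be a 2-torsion free commutative ring with identity, X a locally finite preordered set, and D : I(X,R) → I(X,R) a Jordan derivation of the incidence algebra. Then for all i ≤ j in X and all u ≤ v in X: D(e_{ij})(u,v) = D(e_{ii})(u,i) if v = j and u ≠ i; D(e_{ij})(u,v) = D(e_{jj})(j,v) if u = i and v ≠ j; D(e_{ij})(u,v) = D(e_{ij})(i,j) if (u,v) = (i,j); D(e_{ij})(u,v) = D(e_{ij})(j,i) if (u,v) = (j,i) with j ≤ i and i ≠ j; and D(e_{ij})(u,v) = 0 in all other cases. Moreover, D(e_{jj})(j,k) + D(e_{kk})(j,k) = 0 whenever j ≤ k, and, writing C^{ij}_{ij} := D(e_{ij})(i,j), C^{ij}_{ij} + C^{jk}_{jk} = C^{ik}_{ik} whenever i ≤ j and j ≤ k. -/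
import Mathlib


/-- The "matrix unit" `e_{xy}` of the incidence algebra: the element equal to `1` at `(x, y)`
(where `x ≤ y`) and `0` elsewhere. -/
def eSingle (R : Type*) [CommRing R] {X : Type*} [Preorder X] [DecidableEq X]
    (x y : X) (h : x ≤ y) : IncidenceAlgebra R X :=
  ⟨fun a b => if a = x ∧ b = y then 1 else 0,
   fun a b hab => if_neg (by rintro ⟨rfl, rfl⟩; exact hab h)⟩

section JordanAux
variable {R X : Type*} [CommRing R] [Preorder X] [LocallyFiniteOrder X] [DecidableEq X]

set_option linter.unusedSectionVars false

lemma eSingle_apply (x y : X) (h : x ≤ y) (a b : X) :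
    eSingle R x y h a b = if a = x ∧ b = y then 1 else 0 := rfl


lemma mul_eSingle_apply (f : IncidenceAlgebra R X) (x y : X) (h : x ≤ y) (a b : X) :
    (f * eSingle R x y h) a b = if b = y then f a x else 0 := by
  rw [IncidenceAlgebra.mul_apply]
  by_cases hb : b = y
  · subst hb
    rw [if_pos rfl]
    simp only [eSingle_apply, and_true, mul_ite, mul_one, mul_zero, Finset.sum_ite_eq']
    by_cases hax : a ≤ x
    · rw [if_pos (Finset.mem_Icc.mpr ⟨hax, h⟩)]
    · rw [if_neg (fun hc => hax (Finset.mem_Icc.mp hc).1),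
        IncidenceAlgebra.apply_eq_zero_of_not_le hax]
  · rw [if_neg hb]
    exact Finset.sum_eq_zero fun z _ => by
      rw [eSingle_apply, if_neg (fun hc => hb hc.2), mul_zero]


lemma eSingle_mul_apply (f : IncidenceAlgebra R X) (x y : X) (h : x ≤ y) (a b : X) :
    (eSingle R x y h * f) a b = if a = x then f y b else 0 := by
  rw [IncidenceAlgebra.mul_apply]
  by_cases ha : a = x
  · subst ha
    rw [if_pos rfl]
    simp only [eSingle_apply, true_and, ite_mul, one_mul, zero_mul, Finset.sum_ite_eq']
    by_cases hyb : y ≤ b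
    · rw [if_pos (Finset.mem_Icc.mpr ⟨h, hyb⟩)]
    · rw [if_neg (fun hc => hyb (Finset.mem_Icc.mp hc).2),
        IncidenceAlgebra.apply_eq_zero_of_not_le hyb]
  · rw [if_neg ha]
    exact Finset.sum_eq_zero fun z _ => by
      rw [eSingle_apply, if_neg (fun hc => ha hc.1), zero_mul]


lemma eSingle_mul_eSingle (x y z : X) (hxy : x ≤ y) (hyz : y ≤ z) :
    eSingle R x y hxy * eSingle R y z hyz = eSingle R x z (hxy.trans hyz) := by
  ext a b _
  rw [eSingle_mul_apply, eSingle_apply, eSingle_apply]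
  by_cases hax : a = x
  · rw [if_pos hax]
    by_cases hbz : b = z
    · rw [if_pos ⟨rfl, hbz⟩, if_pos ⟨hax, hbz⟩]
    · rw [if_neg (fun hc => hbz hc.2), if_neg (fun hc => hbz hc.2)]
  · rw [if_neg hax, if_neg (fun hc => hax hc.1)]


lemma eSingle_mul_eSingle_ne (x y u v : X) (hxy : x ≤ y) (huv : u ≤ v) (h : y ≠ u) :
    eSingle R x y hxy * eSingle R u v huv = 0 := by
  ext a b _
  rw [eSingle_mul_apply, IncidenceAlgebra.zero_apply]
  split_ifs with h1
  · rw [eSingle_apply, if_neg (fun hc => h hc.1)]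
  · rfl


lemma appt {f g : IncidenceAlgebra R X} (h : f = g) (a b : X) : f a b = g a b := by rw [h]



variable (D : IncidenceAlgebra R X →ₗ[R] IncidenceAlgebra R X)
    (hD : ∀ f : IncidenceAlgebra R X, D (f * f) = D f * f + f * D f)

include hD

lemma D2 (f g : IncidenceAlgebra R X) :
    D (f * g + g * f) = D f * g + f * D g + D g * f + g * D f := by
  rw [map_add]
  have h := hD (f + g)
  rw [show (f + g) * (f + g) = f * f + (f * g + g * f) + g * g by noncomm_ring,
    map_add, map_add, hD f, hD g] at h
  simp only [map_add] at h
  have key : D (f * g) + D (g * f)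
      = ((D f + D g) * (f + g) + (f + g) * (D f + D g))
        - (D f * f + f * D f) - (D g * g + g * D g) := by
    rw [← h]; abel
  rw [key]; noncomm_ring


lemma dxx_ne (x : X) (hx : x ≤ x) (u v : X) (hu : u ≠ x) (hv : v ≠ x) :
    D (eSingle R x x hx) u v = 0 := by
  have h0 : D (eSingle R x x hx)
      = D (eSingle R x x hx) * eSingle R x x hx + eSingle R x x hx * D (eSingle R x x hx) := by
    have := hD (eSingle R x x hx); rwa [eSingle_mul_eSingle] at this
  have h1 := appt h0 u v
  rw [IncidenceAlgebra.add_apply, mul_eSingle_apply, eSingle_mul_apply, if_neg hv, if_neg hu,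
    add_zero] at h1
  exact h1


lemma dxx_diag (x : X) (hx : x ≤ x) : D (eSingle R x x hx) x x = 0 := by
  have h0 : D (eSingle R x x hx)
      = D (eSingle R x x hx) * eSingle R x x hx + eSingle R x x hx * D (eSingle R x x hx) := by
    have := hD (eSingle R x x hx); rwa [eSingle_mul_eSingle] at this
  have h1 := appt h0 x x
  rw [IncidenceAlgebra.add_apply, mul_eSingle_apply, eSingle_mul_apply, if_pos rfl] at h1
  exact left_eq_add.mp h1


lemma dxx_uu (x : X) (hx : x ≤ x) (u : X) : D (eSingle R x x hx) u u = 0 := by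
  by_cases h : u = x
  · subst h; exact dxx_diag D hD u hx
  · exact dxx_ne D hD x hx u u h h


lemma claimB (j k : X) (hjk : j ≤ k) :
    D (eSingle R j j le_rfl) j k + D (eSingle R k k le_rfl) j k = 0 := by
  by_cases hne : j = k
  · subst hne; rw [dxx_diag D hD j le_rfl, add_zero]
  · have h := D2 D hD (eSingle R j j le_rfl) (eSingle R k k le_rfl)
    rw [eSingle_mul_eSingle_ne _ _ _ _ _ _ hne, eSingle_mul_eSingle_ne _ _ _ _ _ _ (Ne.symm hne),
      add_zero, map_zero] at h
    have h1 := appt h.symm j k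
    rw [IncidenceAlgebra.add_apply, IncidenceAlgebra.add_apply, IncidenceAlgebra.add_apply,
      mul_eSingle_apply, eSingle_mul_apply, mul_eSingle_apply, eSingle_mul_apply,
      IncidenceAlgebra.zero_apply, if_pos rfl, if_pos rfl, if_neg (Ne.symm hne),
      if_neg hne, add_zero, add_zero] at h1
    linear_combination h1

lemma claim1' (i j : X) (hij : i ≤ j) (hne : i ≠ j) (u : X) (hu : u ≠ i) :
    D (eSingle R i j hij) u j = D (eSingle R i i le_rfl) u i := by
  have h := D2 D hD (eSingle R i j hij) (eSingle R i i le_rfl)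
  rw [eSingle_mul_eSingle_ne i j i i hij le_rfl (Ne.symm hne),
    eSingle_mul_eSingle i i j le_rfl hij, zero_add] at h
  replace h : D (eSingle R i j hij)
      = D (eSingle R i j hij) * eSingle R i i le_rfl
        + eSingle R i j hij * D (eSingle R i i le_rfl)
        + D (eSingle R i i le_rfl) * eSingle R i j hij
        + eSingle R i i le_rfl * D (eSingle R i j hij) := h
  have h1 := appt h u j
  rw [IncidenceAlgebra.add_apply, IncidenceAlgebra.add_apply, IncidenceAlgebra.add_apply,
    mul_eSingle_apply, eSingle_mul_apply, mul_eSingle_apply, eSingle_mul_apply,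
    if_neg (Ne.symm hne), if_neg hu, if_pos rfl, if_neg hu] at h1
  simpa using h1


lemma claim2' (i j : X) (hij : i ≤ j) (hne : i ≠ j) (v : X) (hv : v ≠ j) :
    D (eSingle R i j hij) i v = D (eSingle R j j le_rfl) j v := by
  have h := D2 D hD (eSingle R i j hij) (eSingle R j j le_rfl)
  rw [eSingle_mul_eSingle i j j hij le_rfl,
    eSingle_mul_eSingle_ne j j i j le_rfl hij (Ne.symm hne), add_zero] at h
  replace h : D (eSingle R i j hij)
      = D (eSingle R i j hij) * eSingle R j j le_rfl
        + eSingle R i j hij * D (eSingle R j j le_rfl)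
        + D (eSingle R j j le_rfl) * eSingle R i j hij
        + eSingle R j j le_rfl * D (eSingle R i j hij) := h
  have h1 := appt h i v
  rw [IncidenceAlgebra.add_apply, IncidenceAlgebra.add_apply, IncidenceAlgebra.add_apply,
    mul_eSingle_apply, eSingle_mul_apply, mul_eSingle_apply, eSingle_mul_apply,
    if_neg hv, if_pos rfl, if_neg hv, if_neg hne] at h1
  simpa using h1


lemma claim5a (i j : X) (hij : i ≤ j) (hne : i ≠ j) (u v : X) (hu : u ≠ i) (hvi : v ≠ i)
    (hvj : v ≠ j) : D (eSingle R i j hij) u v = 0 := by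
  have h := D2 D hD (eSingle R i j hij) (eSingle R i i le_rfl)
  rw [eSingle_mul_eSingle_ne i j i i hij le_rfl (Ne.symm hne),
    eSingle_mul_eSingle i i j le_rfl hij, zero_add] at h
  replace h : D (eSingle R i j hij)
      = D (eSingle R i j hij) * eSingle R i i le_rfl
        + eSingle R i j hij * D (eSingle R i i le_rfl)
        + D (eSingle R i i le_rfl) * eSingle R i j hij
        + eSingle R i i le_rfl * D (eSingle R i j hij) := h
  have h1 := appt h u v
  rw [IncidenceAlgebra.add_apply, IncidenceAlgebra.add_apply, IncidenceAlgebra.add_apply,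
    mul_eSingle_apply, eSingle_mul_apply, mul_eSingle_apply, eSingle_mul_apply,
    if_neg hvi, if_neg hu, if_neg hvj, if_neg hu] at h1
  simpa using h1


lemma claim5b (i j : X) (hij : i ≤ j) (hne : i ≠ j) (u : X) (hu : u ≠ i) (huj : u ≠ j) :
    D (eSingle R i j hij) u i = 0 := by
  have h := D2 D hD (eSingle R i j hij) (eSingle R u u le_rfl)
  rw [eSingle_mul_eSingle_ne i j u u hij le_rfl (Ne.symm huj),
    eSingle_mul_eSingle_ne u u i j le_rfl hij hu, add_zero, map_zero] at h
  have h1 := appt h.symm u i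
  rw [IncidenceAlgebra.add_apply, IncidenceAlgebra.add_apply, IncidenceAlgebra.add_apply,
    mul_eSingle_apply, eSingle_mul_apply, mul_eSingle_apply, eSingle_mul_apply,
    if_neg (Ne.symm hu), if_neg hu, if_neg hne, if_pos rfl] at h1
  simpa using h1


lemma claimC (i j k : X) (hij : i ≤ j) (hjk : j ≤ k) :
    D (eSingle R i j hij) i j + D (eSingle R j k hjk) j k
      = D (eSingle R i k (hij.trans hjk)) i k := by
  by_cases hij' : i = j
  · subst hij'
    rw [dxx_diag D hD, zero_add]
  · by_cases hjk' : j = k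
    · subst hjk'
      rw [dxx_diag D hD, add_zero]
    · have h := D2 D hD (eSingle R i j hij) (eSingle R j k hjk)
      by_cases hki : k = i
      · subst hki
        rw [eSingle_mul_eSingle k j k hij hjk, eSingle_mul_eSingle j k j hjk hij,
          map_add] at h
        have h1 := appt h k k
        simp only [IncidenceAlgebra.add_apply, mul_eSingle_apply, eSingle_mul_apply,
          eq_self_iff_true, if_true, if_neg (Ne.symm hjk'), add_zero] at h1
        rw [dxx_diag D hD k (hij.trans hjk),
          dxx_ne D hD j (hjk.trans hij) k k (Ne.symm hjk') (Ne.symm hjk')] at h1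
        rw [dxx_diag D hD k (hij.trans hjk)]
        linear_combination -h1
      · rw [eSingle_mul_eSingle i j k hij hjk,
          eSingle_mul_eSingle_ne j k i j hjk hij hki, add_zero] at h
        have h1 := appt h i k
        simp only [IncidenceAlgebra.add_apply, mul_eSingle_apply, eSingle_mul_apply,
          eq_self_iff_true, if_true, if_neg (Ne.symm hjk'), if_neg hij', add_zero] at h1
        exact h1.symm


end JordanAux

/-- For a Jordan derivation `D` of the incidence algebra `I(X,R)` over a
2-torsion free commutative ring `R`: for `i ≤ j` and `u ≤ v`, the entry `D(e_{ij})(u,v)` equals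
`D(e_{ii})(u,i)` if `v = j`, `u ≠ i`; equals `D(e_{jj})(j,v)` if `u = i`, `v ≠ j`; equals
`D(e_{ij})(i,j)` at `(i,j)`; equals `D(e_{ij})(j,i)` at `(j,i)` when `j ≤ i`, `i ≠ j`; and is `0`
in all other cases. Moreover `D(e_{jj})(j,k) + D(e_{kk})(j,k) = 0` for `j ≤ k`, and writing
`C^{ij}_{ij} := D(e_{ij})(i,j)`, `C^{ij}_{ij} + C^{jk}_{jk} = C^{ik}_{ik}` for `i ≤ j ≤ k`. -/
theorem jordan_derivation_apply_eSingle {R X : Type*} [CommRing R]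
    [Preorder X] [LocallyFiniteOrder X] [DecidableEq X]
    (htf : ∀ r : R, 2 • r = 0 → r = 0)
    (D : IncidenceAlgebra R X →ₗ[R] IncidenceAlgebra R X)
    (hD : ∀ f : IncidenceAlgebra R X, D (f * f) = D f * f + f * D f) :
    (∀ i j : X, ∀ hij : i ≤ j, ∀ u v : X, u ≤ v →
      (v = j → u ≠ i → D (eSingle R i j hij) u v = D (eSingle R i i le_rfl) u i) ∧
      (u = i → v ≠ j → D (eSingle R i j hij) u v = D (eSingle R j j le_rfl) j v) ∧
      (u = i → v = j → D (eSingle R i j hij) u v = D (eSingle R i j hij) i j) ∧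
      (u = j → v = i → i ≠ j → D (eSingle R i j hij) u v = D (eSingle R i j hij) j i) ∧
      (u ≠ i → v ≠ j → ¬(u = j ∧ v = i) → D (eSingle R i j hij) u v = 0)) ∧
    (∀ j k : X, ∀ hjk : j ≤ k,
      D (eSingle R j j le_rfl) j k + D (eSingle R k k le_rfl) j k = 0) ∧
    (∀ i j k : X, ∀ hij : i ≤ j, ∀ hjk : j ≤ k,
      D (eSingle R i j hij) i j + D (eSingle R j k hjk) j k
        = D (eSingle R i k (hij.trans hjk)) i k) := by
  refine ⟨?_, claimB D hD, claimC D hD⟩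
  intro i j hij u v huv
  by_cases hij' : i = j
  · subst hij'
    refine ⟨?_, ?_, ?_, ?_, ?_⟩
    · intro hv _; subst hv; rfl
    · intro hu _; subst hu; rfl
    · intro hu hv; subst hu; subst hv; rfl
    · intro _ _ hne; exact absurd rfl hne
    · intro hu hv _; exact dxx_ne D hD i hij u v hu hv
  · refine ⟨?_, ?_, ?_, ?_, ?_⟩
    · intro hv hu; subst hv; exact claim1' D hD i v hij hij' u hu
    · intro hu hv; subst hu; exact claim2' D hD u j hij hij' v hv
    · intro hu hv; subst hu; subst hv; rfl
    · intro hu hv _; subst hu; subst hv; rfl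
    · intro hu hv hne2
      by_cases hvi : v = i
      · subst hvi
        exact claim5b D hD v j hij hij' u hu (fun hh => hne2 ⟨hh, rfl⟩)
      · exact claim5a D hD i j hij hij' u v hu hvi hv
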